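/- Let a = χ^S be a perfect 2-coloring of E^n with matrix of parameters ((n−b, b),(c, n−c)). Then the Fourier transform satisfies â(v) = 0 for every v ∈ E^n with wt(v) ∉ {0, (b+c)/2}. -/

import Mathlib

open Finset

/-- Weight of a vector in the Boolean cube: the number of ones. -/
def wt {n : ℕ} (y : Fin n → Bool) : ℕ := (Finset.univ.filter fun i => y i = true).card

/-- The face `E^n_y(z) = {x : [x,y] = [z,y]}`: all `x` agreeing with `z` on the
support of `y`. -/
def face {n : ℕ} (y z : Fin n → Bool) : Finset (Fin n → Bool) :=
  Finset.univ.filter fun x => ∀ i, y i = true → x i = z i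

/-- `χ^S` is correlation-immune of order `k`: all faces obtained by fixing `k`
coordinates (i.e. faces `E^n_y(z)` with `wt y = k`) intersect `S` in the same
cardinality. -/
def CorrImmune {n : ℕ} (S : Finset (Fin n → Bool)) (k : ℕ) : Prop :=
  ∀ y₁ z₁ y₂ z₂ : Fin n → Bool, wt y₁ = k → wt y₂ = k →
    (face y₁ z₁ ∩ S).card = (face y₂ z₂ ∩ S).card

/-- `cor S` : the maximum order of correlation immunity of `χ^S`. -/
noncomputable def cor {n : ℕ} (S : Finset (Fin n → Bool)) : ℕ :=
  sSup {k | k ≤ n ∧ CorrImmune S k}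

/-- Density `ρ(S) = |S| / 2^n`. -/
def rho {n : ℕ} (S : Finset (Fin n → Bool)) : ℚ := (S.card : ℚ) / 2 ^ n

/-- `nei S`: the average number of neighbors in `S` of vertices of `S`,
`(1/|S|) ∑_{x∈S} |B(x) ∩ S| - 1`, where `B x` is the Hamming ball of radius 1. -/
def nei {n : ℕ} (S : Finset (Fin n → Bool)) : ℚ :=
  (∑ x ∈ S, ((S.filter fun y => hammingDist x y ≤ 1).card : ℚ)) / (S.card : ℚ) - 1

/-- Characteristic function of `S`, as a rational-valued function. -/
def chi {n : ℕ} (S : Finset (Fin n → Bool)) (x : Fin n → Bool) : ℚ := if x ∈ S then 1 else 0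

/-- Characteristic function of `S` as a 2-coloring (color 1 = membership in `S`). -/
def chiCol {n : ℕ} (S : Finset (Fin n → Bool)) (x : Fin n → Bool) : Fin 2 :=
  if x ∈ S then 1 else 0

/-- `Col` is a perfect coloring with parameter matrix `A`: every vertex of color `i`
has exactly `A i j` neighbors (at Hamming distance 1) of color `j`. -/
def IsPerfectColoring {n : ℕ} (Col : (Fin n → Bool) → Fin 2) (A : Fin 2 → Fin 2 → ℕ) : Prop :=
  ∀ x : Fin n → Bool, ∀ j : Fin 2,
    (Finset.univ.filter fun y => hammingDist x y = 1 ∧ Col y = j).card = A (Col x) j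

/-- Fourier transform `â(v) = ∑_u a(u) (-1)^{⟨u,v⟩}`. -/
def fourierT {n : ℕ} (a : (Fin n → Bool) → ℚ) (v : Fin n → Bool) : ℚ :=
  ∑ u : Fin n → Bool, a u * (-1) ^ ((Finset.univ.filter fun i => u i = true ∧ v i = true).card)

/-- Coordinatewise XOR. -/
def xorv {n : ℕ} (u v : Fin n → Bool) : Fin n → Bool := fun i => xor (u i) (v i)

/-- Weight distribution `B_i(a) = (1/|S|) |{(u,v) ∈ S×S : wt(u⊕v) = i}|`. -/
def Bdist {n : ℕ} (S : Finset (Fin n → Bool)) (i : ℕ) : ℚ :=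
  (((S ×ˢ S).filter fun p => wt (xorv p.1 p.2) = i).card : ℚ) / (S.card : ℚ)

/-- Kravchuk polynomial `P_k(i) = ∑_{j=0}^k (-1)^j C(i,j) C(n-i,k-j)`. -/
def krav (n k i : ℕ) : ℚ :=
  ∑ j ∈ Finset.range (k + 1),
    (-1 : ℚ) ^ j * (Nat.choose i j : ℚ) * (Nat.choose (n - i) (k - j) : ℚ)

/-- MacWilliams transform `B'_k(a) = (1/|S|) ∑_{i=0}^n B_i(a) P_k(i)`. -/
def Bmw {n : ℕ} (S : Finset (Fin n → Bool)) (k : ℕ) : ℚ :=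
  (∑ i ∈ Finset.range (n + 1), Bdist S i * krav n k i) / (S.card : ℚ)

/-! The Walsh characters `u ↦ (-1)^⟨u,v⟩` are eigenfunctions of the adjacency operator of the
hypercube, with eigenvalue `n - 2 wt v`. A perfect coloring with parameters `((n-b, b), (c, n-c))`
means that the adjacency operator sends `χ^S` to `b + (n - b - c) χ^S`. Pairing this with the
Walsh character of `v` and using that the operator is self-adjoint gives
`(n - 2 wt v) â(v) = b ∑_u (-1)^⟨u,v⟩ + (n - b - c) â(v)`, and the sum vanishes for `v ≠ 0`. -/

section Hypercube

variable {n : ℕ}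

def flipAt (x : Fin n → Bool) (i : Fin n) : Fin n → Bool := Function.update x i (!x i)

@[simp]
lemma flipAt_flipAt (x : Fin n → Bool) (i : Fin n) : flipAt (flipAt x i) i = x := by
  ext j
  by_cases h : j = i <;> simp [flipAt, Function.update_apply, h]

lemma flipAt_injective (x : Fin n → Bool) : Function.Injective (flipAt x) := by
  intro i j h
  by_contra hij
  simpa [flipAt, Function.update_of_ne hij] using congrFun h i

lemma hammingDist_eq_one_iff {x y : Fin n → Bool} :
    hammingDist x y = 1 ↔ ∃ i, flipAt x i = y := by
  rw [hammingDist, card_eq_one]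
  refine exists_congr fun i => ?_
  simp only [Finset.ext_iff, mem_filter, mem_univ, true_and, mem_singleton, funext_iff, flipAt,
    Function.update_apply]
  refine forall_congr' fun j => ?_
  by_cases h : j = i <;> simp [h, Bool.eq_not_iff]

lemma filter_hammingDist_eq_one (x : Fin n → Bool) :
    ({y | hammingDist x y = 1} : Finset (Fin n → Bool)) = univ.image (flipAt x) := by
  ext y
  simp [hammingDist_eq_one_iff]

def hypercubeAdj {M : Type*} [AddCommMonoid M] (f : (Fin n → Bool) → M) (x : Fin n → Bool) : M :=
  ∑ i, f (flipAt x i)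

lemma sum_hypercubeAdj_mul {R : Type*} [NonUnitalNonAssocSemiring R]
    (f g : (Fin n → Bool) → R) :
    ∑ x, hypercubeAdj f x * g x = ∑ x, f x * hypercubeAdj g x := by
  simp only [hypercubeAdj, sum_mul, mul_sum]
  rw [sum_comm, sum_comm (f := fun x i => f x * g (flipAt x i))]
  refine sum_congr rfl fun i _ => ?_
  exact Fintype.sum_bijective (flipAt · i) (Function.Involutive.bijective (flipAt_flipAt · i)) _ _
    fun x => by rw [flipAt_flipAt]

end Hypercube

section Walsh

variable {R : Type*} [CommRing R] {n : ℕ}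

def walsh (v u : Fin n → Bool) : R := ∏ i, if u i = true ∧ v i = true then -1 else 1

lemma neg_one_pow_card_eq_walsh (v u : Fin n → Bool) :
    (-1 : R) ^ #{i | u i = true ∧ v i = true} = walsh v u := by
  rw [walsh, ← prod_filter, prod_const]

lemma fourierT_eq_sum_mul_walsh (a : (Fin n → Bool) → ℚ) (v : Fin n → Bool) :
    fourierT a v = ∑ u, a u * walsh v u := by
  simp only [fourierT, neg_one_pow_card_eq_walsh]

lemma walsh_flipAt (v u : Fin n → Bool) (i : Fin n) :
    walsh v (flipAt u i) = (if v i = true then (-1 : R) else 1) * walsh v u := by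
  simp only [walsh]
  rw [← mul_prod_erase _ _ (mem_univ i), ← mul_prod_erase _ _ (mem_univ i), ← mul_assoc]
  congr 1
  · cases v i <;> cases hu : u i <;> simp [flipAt, hu]
  · exact prod_congr rfl fun j hj => by rw [flipAt, Function.update_of_ne (ne_of_mem_erase hj)]

lemma sum_ite_neg_one_one (v : Fin n → Bool) :
    ∑ i, (if v i = true then (-1 : R) else 1) = n - 2 * wt v := by
  have h : ∀ i, (if v i = true then (-1 : R) else 1) = 1 - 2 * if v i = true then 1 else 0 :=
    fun i => by split_ifs <;> ring
  simp only [h, sum_sub_distrib, ← mul_sum, sum_boole, sum_const, card_univ, Fintype.card_fin,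
    nsmul_eq_mul, mul_one, wt]

lemma hypercubeAdj_walsh (v u : Fin n → Bool) :
    hypercubeAdj (walsh v) u = ((n : R) - 2 * wt v) * walsh v u := by
  simp only [hypercubeAdj, walsh_flipAt, ← sum_mul, sum_ite_neg_one_one]

lemma sum_walsh_eq_zero {v : Fin n → Bool} (hv : wt v ≠ 0) : ∑ u, (walsh v u : R) = 0 := by
  obtain ⟨i, hi⟩ : ∃ i, v i = true := by
    by_contra! h
    exact hv (card_eq_zero.mpr (filter_eq_empty_iff.mpr fun i _ => by simp [h i]))
  simp only [walsh]
  rw [← Fintype.prod_sum fun i (b : Bool) => if b = true ∧ v i = true then (-1 : R) else 1]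
  exact prod_eq_zero (mem_univ i) (by simp [hi])

end Walsh

lemma hypercubeAdj_chi {n : ℕ} (S : Finset (Fin n → Bool)) (x : Fin n → Bool) :
    hypercubeAdj (chi S) x = #{y | hammingDist x y = 1 ∧ chiCol S y = 1} := by
  have hcol : ∀ y, chiCol S y = 1 ↔ y ∈ S := fun y => by unfold chiCol; split_ifs <;> simp_all
  simp only [hcol, ← filter_filter, filter_hammingDist_eq_one, hypercubeAdj, chi]
  rw [← sum_boole, sum_image fun i _ j _ h => flipAt_injective x h]

lemma hypercubeAdj_chi_of_isPerfectColoring {n b c : ℕ} {S : Finset (Fin n → Bool)}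
    {A : Fin 2 → Fin 2 → ℕ} (hA : IsPerfectColoring (chiCol S) A) (h01 : A 0 1 = b)
    (h11 : A 1 1 + c = n) (x : Fin n → Bool) :
    hypercubeAdj (chi S) x = b + ((n : ℚ) - c - b) * chi S x := by
  have h11' : (A 1 1 : ℚ) + c = n := by exact_mod_cast h11
  rw [hypercubeAdj_chi, hA x 1]
  by_cases hx : x ∈ S
  · simp only [chiCol, chi, hx, ↓reduceIte, mul_one, add_sub_cancel]
    linarith
  · simp [chiCol, chi, hx, h01]

theorem stmt4_general {n : ℕ} (S : Finset (Fin n → Bool)) (b c : ℕ) (A : Fin 2 → Fin 2 → ℕ)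
    (hA : IsPerfectColoring (chiCol S) A)
    (h01 : A 0 1 = b) (h11 : A 1 1 + c = n) :
    ∀ v : Fin n → Bool, wt v ≠ 0 → 2 * wt v ≠ b + c → fourierT (chi S) v = 0 := by
  intro v hv hbc
  rw [fourierT_eq_sum_mul_walsh]
  set F := ∑ u, chi S u * walsh v u
  have hF : ((n : ℚ) - 2 * wt v) * F = ((n : ℚ) - c - b) * F :=
    calc ((n : ℚ) - 2 * wt v) * F = ∑ u, chi S u * hypercubeAdj (walsh v) u := by
          simp only [F, hypercubeAdj_walsh, mul_sum, mul_left_comm]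
      _ = ∑ u, hypercubeAdj (chi S) u * walsh v u := (sum_hypercubeAdj_mul _ _).symm
      _ = b * ∑ u, walsh v u + ((n : ℚ) - c - b) * F := by
          simp only [F, hypercubeAdj_chi_of_isPerfectColoring hA h01 h11, add_mul,
            sum_add_distrib, mul_sum, mul_assoc]
      _ = ((n : ℚ) - c - b) * F := by rw [sum_walsh_eq_zero hv, mul_zero, zero_add]
  have hne : (n : ℚ) - 2 * wt v ≠ (n : ℚ) - c - b := by
    intro h
    exact hbc (by exact_mod_cast (by linarith : (2 * wt v : ℚ) = b + c))
  exact (mul_eq_mul_right_iff.mp hF).resolve_left hne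

/-- If `χ^S` is a perfect coloring with matrix `((n-b, b), (c, n-c))`
then `â(v) = 0` for every `v` with `wt v ∉ {0, (b+c)/2}`. -/
theorem stmt4 {n : ℕ} (S : Finset (Fin n → Bool)) (b c : ℕ) (A : Fin 2 → Fin 2 → ℕ)
    (hA : IsPerfectColoring (chiCol S) A)
    (h00 : A 0 0 + b = n) (h01 : A 0 1 = b) (h10 : A 1 0 = c) (h11 : A 1 1 + c = n) :
    ∀ v : Fin n → Bool, wt v ≠ 0 → 2 * wt v ≠ b + c → fourierT (chi S) v = 0 :=
  stmt4_general S b c A hA h01 h11
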